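/- arXiv:2309.07843 — 8 statements merged into one kernel-verified Lean document; each statement's English description precedes it below -/
import Mathlib

section
/- Fix u ∈ ℂ and reals σ ≠ 0, ρ, and κ₀ ∈ ℝ. Set α̂ = -(1/2)·u·(u + i), γ = σ²/2, and β(κ) = κ - i·u·σ·ρ for κ ∈ ℝ. Let d : ℝ → ℂ satisfy HasDerivAt d (β(κ₀)/d(κ₀)) κ₀ with d(κ₀) ≠ 0 and β(κ₀) + d(κ₀) ≠ 0, and define g(κ) = (β(κ) - d(κ))/(β(κ) + d(κ)). Then HasDerivAt g (-2·g(κ₀)/d(κ₀)) κ₀. -/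
/-! With `β' = 1` and `d' = β / d`, the quotient rule gives the numerator
`(1 - β/d)(β + d) - (β - d)(1 + β/d) = 2 (d² - β²) / d = -2 (β - d)(β + d) / d`,
and one factor `β + d` cancels against the squared denominator. -/

variable {𝕜 𝕜' : Type*} [NontriviallyNormedField 𝕜] [NontriviallyNormedField 𝕜']
  [NormedAlgebra 𝕜 𝕜']

theorem hasDerivAt_sub_div_add_of_hasDerivAt_div {β d : 𝕜 → 𝕜'} {x : 𝕜}
    (hβ : HasDerivAt β 1 x) (hd : HasDerivAt d (β x / d x) x)
    (hd0 : d x ≠ 0) (hβd : β x + d x ≠ 0) :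
    HasDerivAt (fun y => (β y - d y) / (β y + d y))
      (-2 * ((β x - d x) / (β x + d x)) / d x) x := by
  refine ((hβ.sub hd).fun_div (hβ.add hd) hβd).congr_deriv ?_
  simp only [Pi.add_apply, Pi.sub_apply]
  field_simp
  ring

theorem heston_g_deriv_kappa_general (u : ℂ) (σ ρ κ₀ : ℝ)
    (β : ℝ → ℂ) (hβ : ∀ κ : ℝ, β κ = (κ : ℂ) - Complex.I * u * σ * ρ)
    (d : ℝ → ℂ) (hd : HasDerivAt d (β κ₀ / d κ₀) κ₀)
    (hd0 : d κ₀ ≠ 0) (hβd : β κ₀ + d κ₀ ≠ 0)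
    (g : ℝ → ℂ) (hg : ∀ κ : ℝ, g κ = (β κ - d κ) / (β κ + d κ)) :
    HasDerivAt g (-2 * g κ₀ / d κ₀) κ₀ := by
  have hβ' : HasDerivAt β 1 κ₀ := by
    rw [funext hβ]
    exact (hasDerivAt_id κ₀).ofReal_comp.sub_const _
  rw [funext hg]
  exact hasDerivAt_sub_div_add_of_hasDerivAt_div hβ' hd hd0 hβd

/-- Derivative of `g = (β - d)/(β + d)` with respect to the mean-reversion
speed `κ`: `∂g/∂κ = -2 g / d`. -/
theorem heston_g_deriv_kappa (u : ℂ) (σ ρ κ₀ : ℝ) (hσ : σ ≠ 0)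
    (β : ℝ → ℂ) (hβ : ∀ κ : ℝ, β κ = (κ : ℂ) - Complex.I * u * σ * ρ)
    (d : ℝ → ℂ) (hd : HasDerivAt d (β κ₀ / d κ₀) κ₀)
    (hd0 : d κ₀ ≠ 0) (hβd : β κ₀ + d κ₀ ≠ 0)
    (g : ℝ → ℂ) (hg : ∀ κ : ℝ, g κ = (β κ - d κ) / (β κ + d κ)) :
    HasDerivAt g (-2 * g κ₀ / d κ₀) κ₀ :=
  heston_g_deriv_kappa_general u σ ρ κ₀ β hβ d hd hd0 hβd g hg
end

section
/- Fix u ∈ ℂ and reals σ ≠ 0, ρ, τ > 0 and κ₀ ∈ ℝ. Set α̂ = -(1/2)·u·(u + i), γ = σ²/2, and β(κ) = κ - i·u·σ·ρ for κ ∈ ℝ. Let d : ℝ → ℂ satisfy HasDerivAt d (β(κ₀)/d(κ₀)) κ₀ with d(κ₀) ≠ 0 and β(κ₀) + d(κ₀) ≠ 0, and define g(κ) = (β(κ) - d(κ))/(β(κ) + d(κ)). Write β, d, g for the values at κ₀, and assume g ≠ 1, g·exp(-d·τ) - 1 ≠ 0, and that (g·exp(-d·τ) - 1)/(g - 1) lies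 in the slit plane. Then the function κ ↦ Log((g(κ)·exp(-d(κ)·τ) - 1)/(g(κ) - 1)) has derivative at κ₀ equal to (2·g·(g·exp(-d·τ) - 1) - g·(g - 1)·exp(-d·τ)·(2 + τ·β)) / (d·(g - 1)·(g·exp(-d·τ) - 1)). -/
/-!
Differentiating `d² = β² - 4α̂γ` gives `d' = β β' / d`, under which `g = (β - d)/(β + d)` satisfies
the closed-form equation `g' = -2 β' g / d`. The logarithm of `N/D`, with `N = g e^{-dτ} - 1` and
`D = g - 1`, has derivative `N'/N - D'/D`; substituting `g' = -2g/d` and `d' = β/d` into `N'` and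
`D'` gives the formula.
-/

open Complex

section RatioDeriv

variable {𝕜 𝕜' : Type*} [NontriviallyNormedField 𝕜] [NontriviallyNormedField 𝕜']
  [NormedAlgebra 𝕜 𝕜'] {β d : 𝕜 → 𝕜'} {β' : 𝕜'} {x : 𝕜}

theorem HasDerivAt.sub_div_add_of_hasDerivAt_sqrt (hβ : HasDerivAt β β' x)
    (hd : HasDerivAt d (β x * β' / d x) x) (hd0 : d x ≠ 0) (hβd : β x + d x ≠ 0) :
    HasDerivAt (fun y => (β y - d y) / (β y + d y))
      (-2 * β' * ((β x - d x) / (β x + d x)) / d x) x := by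
  refine ((hβ.sub hd).div (hβ.add hd) hβd).congr_deriv ?_
  simp only [Pi.add_apply, Pi.sub_apply]
  field_simp
  ring

end RatioDeriv

theorem HasDerivAt.clog_div_real {N D : ℝ → ℂ} {N' D' : ℂ} {x : ℝ} (hN : HasDerivAt N N' x)
    (hD : HasDerivAt D D' x) (hN0 : N x ≠ 0) (hD0 : D x ≠ 0) (hslit : N x / D x ∈ slitPlane) :
    HasDerivAt (fun y => Complex.log (N y / D y)) (N' / N x - D' / D x) x := by
  refine ((hN.div hD hD0).clog_real hslit).congr_deriv ?_
  rw [Pi.div_apply]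
  field_simp

theorem heston_log_deriv_kappa_general (u : ℂ) (σ ρ τ κ₀ : ℝ)
    (β : ℝ → ℂ) (hβ : ∀ κ : ℝ, β κ = (κ : ℂ) - Complex.I * u * σ * ρ)
    (d : ℝ → ℂ) (hd : HasDerivAt d (β κ₀ / d κ₀) κ₀)
    (hd0 : d κ₀ ≠ 0) (hβd : β κ₀ + d κ₀ ≠ 0)
    (g : ℝ → ℂ) (hg : ∀ κ : ℝ, g κ = (β κ - d κ) / (β κ + d κ))
    (hg1 : g κ₀ ≠ 1)
    (hden : g κ₀ * Complex.exp (-(d κ₀) * τ) - 1 ≠ 0)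
    (hslit : (g κ₀ * Complex.exp (-(d κ₀) * τ) - 1) / (g κ₀ - 1) ∈ Complex.slitPlane) :
    HasDerivAt (fun κ : ℝ =>
        Complex.log ((g κ * Complex.exp (-(d κ) * τ) - 1) / (g κ - 1)))
      ((2 * g κ₀ * (g κ₀ * Complex.exp (-(d κ₀) * τ) - 1)
          - g κ₀ * (g κ₀ - 1) * Complex.exp (-(d κ₀) * τ) * (2 + (τ : ℂ) * β κ₀))
        / (d κ₀ * (g κ₀ - 1) * (g κ₀ * Complex.exp (-(d κ₀) * τ) - 1))) κ₀ := by
  have hβ' : HasDerivAt β 1 κ₀ := by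
    simpa [funext hβ] using (hasDerivAt_id κ₀).ofReal_comp.sub_const (I * u * σ * ρ)
  have hg' : HasDerivAt g (-2 * g κ₀ / d κ₀) κ₀ := by
    rw [funext hg]
    simpa [hg] using hβ'.sub_div_add_of_hasDerivAt_sqrt (by simpa using hd) hd0 hβd
  have hexp : HasDerivAt (fun κ : ℝ => exp (-d κ * τ)) (exp (-d κ₀ * τ) * (-(β κ₀ / d κ₀) * τ)) κ₀ :=
    (hd.neg.mul_const (τ : ℂ)).cexp
  have hg1' : g κ₀ - 1 ≠ 0 := sub_ne_zero.mpr hg1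
  refine (HasDerivAt.clog_div_real ((hg'.mul hexp).sub_const 1) (hg'.sub_const 1) hden hg1'
    hslit).congr_deriv ?_
  rw [Pi.mul_apply]
  generalize exp (-d κ₀ * τ) = E at hden ⊢
  field_simp
  ring

/-- Derivative with respect to `κ` of `Log((g e^{-dτ} - 1)/(g - 1))`
(Appendix B.6 of the paper). -/
theorem heston_log_deriv_kappa (u : ℂ) (σ ρ τ κ₀ : ℝ) (hσ : σ ≠ 0) (hτ : 0 < τ)
    (β : ℝ → ℂ) (hβ : ∀ κ : ℝ, β κ = (κ : ℂ) - Complex.I * u * σ * ρ)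
    (d : ℝ → ℂ) (hd : HasDerivAt d (β κ₀ / d κ₀) κ₀)
    (hd0 : d κ₀ ≠ 0) (hβd : β κ₀ + d κ₀ ≠ 0)
    (g : ℝ → ℂ) (hg : ∀ κ : ℝ, g κ = (β κ - d κ) / (β κ + d κ))
    (hg1 : g κ₀ ≠ 1)
    (hden : g κ₀ * Complex.exp (-(d κ₀) * τ) - 1 ≠ 0)
    (hslit : (g κ₀ * Complex.exp (-(d κ₀) * τ) - 1) / (g κ₀ - 1) ∈ Complex.slitPlane) :
    HasDerivAt (fun κ : ℝ =>
        Complex.log ((g κ * Complex.exp (-(d κ) * τ) - 1) / (g κ - 1)))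
      ((2 * g κ₀ * (g κ₀ * Complex.exp (-(d κ₀) * τ) - 1)
          - g κ₀ * (g κ₀ - 1) * Complex.exp (-(d κ₀) * τ) * (2 + (τ : ℂ) * β κ₀))
        / (d κ₀ * (g κ₀ - 1) * (g κ₀ * Complex.exp (-(d κ₀) * τ) - 1))) κ₀ :=
  heston_log_deriv_kappa_general u σ ρ τ κ₀ β hβ d hd hd0 hβd g hg hg1 hden hslit
end

section
/- Fix u ∈ ℂ and reals σ ≠ 0, ρ, θ, τ > 0 and κ₀ ∈ ℝ with κ₀ ≠ 0. Set α̂ = -(1/2)·u·(u + i), γ = σ²/2, and β(κ) = κ - i·u·σ·ρ for κ ∈ ℝ. Let d : ℝ → ℂ satisfy HasDerivAt d (β(κ₀)/d(κ₀)) κ₀ with d(κ₀) ≠ 0 and β(κ₀) + d(κ₀) ≠ 0, define g(κ) = (β(κ) - d(κ))/(β(κ) + d(κ)), and define A(κ) = (κ·θ/σ²)·( τ·(β(κ) - d(κ)) - 2·Log((g(κ)·exp(-d(κ)·τ) - 1)/(g(κ) - 1)) ). Write β, d, g for the values at κ₀, assume g ≠ 1, g·exp(-d·τ) - 1 ≠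 0, and that (g·exp(-d·τ) - 1)/(g - 1) lies in the slit plane. Then HasDerivAt A ( A(κ₀)/κ₀ - (κ₀·θ/(d·σ²))·( -d·τ + τ·β + 4·g/(g - 1) + 2·g·exp(-d·τ)·(2 + τ·β)/(1 - g·exp(-d·τ)) ) ) κ₀. -/
/-!
Write `A = (κθ/σ²)·B(κ)`. Since `β' = 1` and `d' = β/d` (the derivative of a branch of
`√(β² - 4α̂γ)`), the quotient rule gives `g' = -2g/d`, and the logarithm of the quotient
`N/D = (g e^{-dτ} - 1)/(g - 1)` differentiates as `N'/N - D'/D`. The product rule then splits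
`A'` into `A/κ` plus `κθ/σ²` times `B'`, which is the stated bracket over `-d`.
-/

open Complex

theorem HasDerivAt.clog_real_div {f g : ℝ → ℂ} {f' g' : ℂ} {x : ℝ} (hf : HasDerivAt f f' x)
    (hg : HasDerivAt g g' x) (hf0 : f x ≠ 0) (hg0 : g x ≠ 0) (hx : f x / g x ∈ slitPlane) :
    HasDerivAt (fun t => Complex.log (f t / g t)) (f' / f x - g' / g x) x := by
  refine ((hf.div hg hg0).clog_real hx).congr_deriv ?_
  simp only [Pi.div_apply]
  field_simp

theorem hasDerivAt_heston_g {𝕜 𝕜' : Type*} [NontriviallyNormedField 𝕜]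
    [NontriviallyNormedField 𝕜'] [NormedAlgebra 𝕜 𝕜'] {b d : 𝕜 → 𝕜'} {x : 𝕜}
    (hb : HasDerivAt b 1 x) (hd : HasDerivAt d (b x / d x) x) (hd0 : d x ≠ 0)
    (hbd : b x + d x ≠ 0) :
    HasDerivAt (fun t => (b t - d t) / (b t + d t))
      (-2 * ((b x - d x) / (b x + d x)) / d x) x := by
  refine ((hb.sub hd).div (hb.add hd) hbd).congr_deriv ?_
  simp only [Pi.sub_apply, Pi.add_apply]
  field_simp
  ring

theorem hasDerivAt_heston_log {g d : ℝ → ℂ} {b : ℂ} {τ x : ℝ}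
    (hg : HasDerivAt g (-2 * g x / d x) x) (hd : HasDerivAt d (b / d x) x) (hd0 : d x ≠ 0)
    (hg1 : g x ≠ 1) (hden : g x * exp (-d x * τ) - 1 ≠ 0)
    (hslit : (g x * exp (-d x * τ) - 1) / (g x - 1) ∈ slitPlane) :
    HasDerivAt (fun t => log ((g t * exp (-d t * τ) - 1) / (g t - 1)))
      ((2 * g x / (g x - 1) + g x * exp (-d x * τ) * (2 + τ * b) / (1 - g x * exp (-d x * τ)))
        / d x) x := by
  have hE : HasDerivAt (fun t => exp (-d t * τ)) (exp (-d x * τ) * (-(b / d x) * τ)) x :=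
    (hd.neg.mul_const (τ : ℂ)).cexp
  have hN := (hg.mul hE).sub_const 1
  refine (hN.clog_real_div (hg.sub_const 1) hden (sub_ne_zero.mpr hg1) hslit).congr_deriv ?_
  simp only [Pi.mul_apply]
  generalize exp (-d x * τ) = E at hden ⊢
  have hgE : 1 - g x * E ≠ 0 := fun h => hden (by linear_combination -h)
  have hg1' : g x - 1 ≠ 0 := sub_ne_zero.mpr hg1
  field_simp
  ring

theorem heston_A_deriv_kappa_general (u : ℂ) (σ ρ θ τ κ₀ : ℝ)
    (hκ₀ : κ₀ ≠ 0)
    (β : ℝ → ℂ) (hβ : ∀ κ : ℝ, β κ = (κ : ℂ) - Complex.I * u * σ * ρ)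
    (d : ℝ → ℂ) (hd : HasDerivAt d (β κ₀ / d κ₀) κ₀)
    (hd0 : d κ₀ ≠ 0) (hβd : β κ₀ + d κ₀ ≠ 0)
    (g : ℝ → ℂ) (hg : ∀ κ : ℝ, g κ = (β κ - d κ) / (β κ + d κ))
    (A : ℝ → ℂ)
    (hA : ∀ κ : ℝ, A κ = ((κ : ℂ) * θ / σ ^ 2) *
        ((τ : ℂ) * (β κ - d κ)
          - 2 * Complex.log ((g κ * Complex.exp (-(d κ) * τ) - 1) / (g κ - 1))))
    (hg1 : g κ₀ ≠ 1)
    (hden : g κ₀ * Complex.exp (-(d κ₀) * τ) - 1 ≠ 0)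
    (hslit : (g κ₀ * Complex.exp (-(d κ₀) * τ) - 1) / (g κ₀ - 1) ∈ Complex.slitPlane) :
    HasDerivAt A
      (A κ₀ / (κ₀ : ℂ)
        - ((κ₀ : ℂ) * θ / (d κ₀ * σ ^ 2)) *
          (-(d κ₀) * τ + (τ : ℂ) * β κ₀ + 4 * g κ₀ / (g κ₀ - 1)
            + 2 * g κ₀ * Complex.exp (-(d κ₀) * τ) * (2 + (τ : ℂ) * β κ₀)
              / (1 - g κ₀ * Complex.exp (-(d κ₀) * τ)))) κ₀ := by
  have hκ : HasDerivAt (fun κ : ℝ => (κ : ℂ)) 1 κ₀ := by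
    simpa using (hasDerivAt_id κ₀).ofReal_comp
  have hβ' : HasDerivAt β 1 κ₀ := by
    simpa [funext hβ] using hκ.sub_const (I * u * σ * ρ)
  have hg' : HasDerivAt g (-2 * g κ₀ / d κ₀) κ₀ := by
    simpa only [funext hg] using hasDerivAt_heston_g hβ' hd hd0 hβd
  have hB := ((hβ'.sub hd).const_mul (τ : ℂ)).sub
    ((hasDerivAt_heston_log hg' hd hd0 hg1 hden hslit).const_mul 2)
  rw [hA κ₀, funext hA]
  refine (((hκ.mul_const (θ : ℂ)).div_const ((σ : ℂ) ^ 2)).mul hB).congr_deriv ?_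
  have hκ₀' : (κ₀ : ℂ) ≠ 0 := ofReal_ne_zero.mpr hκ₀
  simp only [Pi.sub_apply]
  field_simp
  ring

/-- Derivative of the component `A` of the Heston characteristic function with
respect to the mean-reversion speed `κ` (Equation (35) of the paper). -/
theorem heston_A_deriv_kappa (u : ℂ) (σ ρ θ τ κ₀ : ℝ) (hσ : σ ≠ 0) (hτ : 0 < τ)
    (hκ₀ : κ₀ ≠ 0)
    (β : ℝ → ℂ) (hβ : ∀ κ : ℝ, β κ = (κ : ℂ) - Complex.I * u * σ * ρ)
    (d : ℝ → ℂ) (hd : HasDerivAt d (β κ₀ / d κ₀) κ₀)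
    (hd0 : d κ₀ ≠ 0) (hβd : β κ₀ + d κ₀ ≠ 0)
    (g : ℝ → ℂ) (hg : ∀ κ : ℝ, g κ = (β κ - d κ) / (β κ + d κ))
    (A : ℝ → ℂ)
    (hA : ∀ κ : ℝ, A κ = ((κ : ℂ) * θ / σ ^ 2) *
        ((τ : ℂ) * (β κ - d κ)
          - 2 * Complex.log ((g κ * Complex.exp (-(d κ) * τ) - 1) / (g κ - 1))))
    (hg1 : g κ₀ ≠ 1)
    (hden : g κ₀ * Complex.exp (-(d κ₀) * τ) - 1 ≠ 0)
    (hslit : (g κ₀ * Complex.exp (-(d κ₀) * τ) - 1) / (g κ₀ - 1) ∈ Complex.slitPlane) :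
    HasDerivAt A
      (A κ₀ / (κ₀ : ℂ)
        - ((κ₀ : ℂ) * θ / (d κ₀ * σ ^ 2)) *
          (-(d κ₀) * τ + (τ : ℂ) * β κ₀ + 4 * g κ₀ / (g κ₀ - 1)
            + 2 * g κ₀ * Complex.exp (-(d κ₀) * τ) * (2 + (τ : ℂ) * β κ₀)
              / (1 - g κ₀ * Complex.exp (-(d κ₀) * τ)))) κ₀ :=
  heston_A_deriv_kappa_general u σ ρ θ τ κ₀ hκ₀ β hβ d hd hd0 hβd g hg A hA hg1 hden hslit
end

section
/- Fix u ∈ ℂ and reals σ ≠ 0, κ, θ, τ > 0 and ρ₀ ∈ ℝ. Set α̂ = -(1/2)·u·(u + i), γ = σ²/2, and β(ρ) = κ - i·u·σ·ρ for ρ ∈ ℝ. Let d : ℝ → ℂ satisfy HasDerivAt d (-i·u·σ·β(ρ₀)/d(ρ₀)) ρ₀ with d(ρ₀) ≠ 0 and β(ρ₀) + d(ρ₀) ≠ 0, define g(ρ) = (β(ρ) - d(ρ))/(β(ρ) + d(ρ)), and define A(ρ) = (κ·θ/σ²)·( τ·(β(ρ) - d(ρ)) - 2·Log((g(ρ)·exp(-d(ρ)·τ)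 - 1)/(g(ρ) - 1)) ). Write β, d, g for the values at ρ₀, assume g ≠ 1, g·exp(-d·τ) - 1 ≠ 0, and that (g·exp(-d·τ) - 1)/(g - 1) lies in the slit plane. Then HasDerivAt A ( (κ·θ·i·u/(d·σ))·( τ·(β - d) - 2·g·( exp(-d·τ)·(2 + τ·β)/(g·exp(-d·τ) - 1) - 2/(g - 1) ) ) ) ρ₀. -/
/-!
With `c = -i·u·σ` we have `β' = c` and `d' = c·β/d`, and these two derivatives make the
Möbius ratio `g = (β - d)/(β + d)` satisfy `g' = -2·c·g/d`. Differentiating the logarithm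
of `N/D`, with `N = g·exp(-d·τ) - 1` and `D = g - 1`, as `N'/N - D'/D` then factors
`-c·g/d` out of the whole logarithmic term, and `(κθ/σ²)·(-c/d) = κθ·i·u/(d·σ)`.
-/

open Complex

/-- The hypothesis on `d` is what one gets for a branch `d = √(β² + C)`. -/
theorem HasDerivAt.sub_div_add {𝕜 𝕜' : Type*} [NontriviallyNormedField 𝕜]
    [NontriviallyNormedField 𝕜'] [NormedAlgebra 𝕜 𝕜'] {β d : 𝕜 → 𝕜'} {c : 𝕜'} {x : 𝕜}
    (hβ : HasDerivAt β c x)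
    (hd : HasDerivAt d (c * β x / d x) x) (hd0 : d x ≠ 0) (hβd : β x + d x ≠ 0) :
    HasDerivAt (fun y => (β y - d y) / (β y + d y))
      (-2 * c * ((β x - d x) / (β x + d x)) / d x) x := by
  refine ((hβ.sub hd).div (hβ.add hd) hβd).congr_deriv ?_
  simp only [Pi.sub_apply, Pi.add_apply]
  field_simp
  ring

theorem HasDerivAt.mul_cexp_neg_mul_sub_one {𝕜 : Type*} [NontriviallyNormedField 𝕜]
    [NormedAlgebra 𝕜 ℂ] {β d g : 𝕜 → ℂ} {c t : ℂ} {x : 𝕜}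
    (hg : HasDerivAt g (-2 * c * g x / d x) x) (hd : HasDerivAt d (c * β x / d x) x) :
    HasDerivAt (fun y => g y * Complex.exp (-d y * t) - 1)
      (-(c * g x / d x) * (2 + t * β x) * Complex.exp (-d x * t)) x := by
  refine ((hg.mul (hd.neg.mul_const t).cexp).sub_const 1).congr_deriv ?_
  simp only [Pi.neg_apply, neg_mul]
  ring

theorem HasDerivAt.clog_div_real_s10 {f g : ℝ → ℂ} {f' g' : ℂ} {x : ℝ}
    (hf : HasDerivAt f f' x) (hg : HasDerivAt g g' x) (hf0 : f x ≠ 0) (hg0 : g x ≠ 0)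
    (hslit : f x / g x ∈ slitPlane) :
    HasDerivAt (fun y => Complex.log (f y / g y)) (f' / f x - g' / g x) x := by
  refine ((hf.div hg hg0).clog_real hslit).congr_deriv ?_
  simp only [Pi.div_apply]
  field_simp

theorem heston_A_deriv_rho_general (u : ℂ) (σ κ θ τ ρ₀ : ℝ) (hσ : σ ≠ 0)
    (β : ℝ → ℂ) (hβ : ∀ ρ : ℝ, β ρ = (κ : ℂ) - Complex.I * u * σ * ρ)
    (d : ℝ → ℂ) (hd : HasDerivAt d (-Complex.I * u * σ * β ρ₀ / d ρ₀) ρ₀)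
    (hd0 : d ρ₀ ≠ 0) (hβd : β ρ₀ + d ρ₀ ≠ 0)
    (g : ℝ → ℂ) (hg : ∀ ρ : ℝ, g ρ = (β ρ - d ρ) / (β ρ + d ρ))
    (A : ℝ → ℂ)
    (hA : ∀ ρ : ℝ, A ρ = ((κ : ℂ) * θ / σ ^ 2) *
        ((τ : ℂ) * (β ρ - d ρ)
          - 2 * Complex.log ((g ρ * Complex.exp (-(d ρ) * τ) - 1) / (g ρ - 1))))
    (hg1 : g ρ₀ ≠ 1)
    (hden : g ρ₀ * Complex.exp (-(d ρ₀) * τ) - 1 ≠ 0)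
    (hslit : (g ρ₀ * Complex.exp (-(d ρ₀) * τ) - 1) / (g ρ₀ - 1) ∈ Complex.slitPlane) :
    HasDerivAt A
      (((κ : ℂ) * θ * Complex.I * u / (d ρ₀ * σ)) *
        ((τ : ℂ) * (β ρ₀ - d ρ₀)
          - 2 * g ρ₀ *
            (Complex.exp (-(d ρ₀) * τ) * (2 + (τ : ℂ) * β ρ₀)
                / (g ρ₀ * Complex.exp (-(d ρ₀) * τ) - 1)
              - 2 / (g ρ₀ - 1)))) ρ₀ := by
  set c : ℂ := -I * u * σ
  have hβ' : HasDerivAt β c ρ₀ := by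
    have : β = fun ρ : ℝ => (κ : ℂ) + c * ρ := funext fun ρ => by rw [hβ]; ring
    simpa [this] using ((hasDerivAt_id ρ₀).ofReal_comp.const_mul c).const_add (κ : ℂ)
  have hg' : HasDerivAt g (-2 * c * g ρ₀ / d ρ₀) ρ₀ := by
    rw [hg ρ₀, funext hg]
    exact hβ'.sub_div_add hd hd0 hβd
  have hlog := (hg'.mul_cexp_neg_mul_sub_one hd).clog_div_real_s10 (hg'.sub_const 1) hden
    (sub_ne_zero.mpr hg1) hslit
  rw [funext hA]
  refine ((((hβ'.sub hd).const_mul (τ : ℂ)).sub (hlog.const_mul 2)).const_mul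
    ((κ : ℂ) * θ / σ ^ 2)).congr_deriv ?_
  have hσC : (σ : ℂ) ≠ 0 := ofReal_ne_zero.mpr hσ
  simp only [c]
  field_simp [sub_ne_zero.mpr hg1]
  ring

/-- Derivative of the component `A` of the Heston characteristic function with
respect to the correlation `ρ` (Equation (38) of the paper). -/
theorem heston_A_deriv_rho (u : ℂ) (σ κ θ τ ρ₀ : ℝ) (hσ : σ ≠ 0) (hτ : 0 < τ)
    (β : ℝ → ℂ) (hβ : ∀ ρ : ℝ, β ρ = (κ : ℂ) - Complex.I * u * σ * ρ)
    (d : ℝ → ℂ) (hd : HasDerivAt d (-Complex.I * u * σ * β ρ₀ / d ρ₀) ρ₀)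
    (hd0 : d ρ₀ ≠ 0) (hβd : β ρ₀ + d ρ₀ ≠ 0)
    (g : ℝ → ℂ) (hg : ∀ ρ : ℝ, g ρ = (β ρ - d ρ) / (β ρ + d ρ))
    (A : ℝ → ℂ)
    (hA : ∀ ρ : ℝ, A ρ = ((κ : ℂ) * θ / σ ^ 2) *
        ((τ : ℂ) * (β ρ - d ρ)
          - 2 * Complex.log ((g ρ * Complex.exp (-(d ρ) * τ) - 1) / (g ρ - 1))))
    (hg1 : g ρ₀ ≠ 1)
    (hden : g ρ₀ * Complex.exp (-(d ρ₀) * τ) - 1 ≠ 0)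
    (hslit : (g ρ₀ * Complex.exp (-(d ρ₀) * τ) - 1) / (g ρ₀ - 1) ∈ Complex.slitPlane) :
    HasDerivAt A
      (((κ : ℂ) * θ * Complex.I * u / (d ρ₀ * σ)) *
        ((τ : ℂ) * (β ρ₀ - d ρ₀)
          - 2 * g ρ₀ *
            (Complex.exp (-(d ρ₀) * τ) * (2 + (τ : ℂ) * β ρ₀)
                / (g ρ₀ * Complex.exp (-(d ρ₀) * τ) - 1)
              - 2 / (g ρ₀ - 1)))) ρ₀ :=
  heston_A_deriv_rho_general u σ κ θ τ ρ₀ hσ β hβ d hd hd0 hβd g hg A hA hg1 hden hslit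
end

section
/- Fix u ∈ ℂ and reals σ ≠ 0, κ, τ > 0 and ρ₀ ∈ ℝ. Set α̂ = -(1/2)·u·(u + i), γ = σ²/2, and β(ρ) = κ - i·u·σ·ρ for ρ ∈ ℝ. Let d : ℝ → ℂ satisfy HasDerivAt d (-i·u·σ·β(ρ₀)/d(ρ₀)) ρ₀ with d(ρ₀) ≠ 0 and β(ρ₀) + d(ρ₀) ≠ 0, define g(ρ) = (β(ρ) - d(ρ))/(β(ρ) + d(ρ)), and define B(ρ) = ((β(ρ) - d(ρ))/σ²)·(1 - exp(-d(ρ)·τ))/(1 - g(ρ)·exp(-d(ρ)·τ)). Write β, d, g for the values at ρ₀, and assume 1 - exp(-d·τ) ≠ 0 and 1 - g·exp(-d·τ) ≠ 0. Then HasDerivAt B ( (i·u·σ/d)·B(ρ₀)·( 1 + exp(-d·τ)·( -τ·β/(1 - exp(-d·τ)) + g·(2 + τ·β)/(1 - g·exp(-d·τ)) ) ) ) ρ₀. -/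
/-! With `c = i·u·σ` we have `β' = -c` and `d' = -c·β/d`, so `β - d` and `β + d` have logarithmic
derivatives `c/d` and `-c/d` at `ρ₀`. Hence `g' = 2(c/d)·g` and `(exp(-dτ))' = (c/d)·τβ·exp(-dτ)`:
every ingredient of `B` has derivative `c/d` times a simple multiple of itself, and the quotient
rule produces the common factor `(c/d)·B`. -/

section LogDeriv

variable {𝕜 𝕜' : Type*} [NontriviallyNormedField 𝕜] [NontriviallyNormedField 𝕜']
  [NormedAlgebra 𝕜 𝕜'] {f h : 𝕜 → 𝕜'} {a b : 𝕜'} {x : 𝕜}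

theorem HasDerivAt.div_of_eq_mul (hf : HasDerivAt f (a * f x) x) (hh : HasDerivAt h (b * h x) x)
    (hx : h x ≠ 0) : HasDerivAt (fun y => f y / h y) ((a - b) * (f x / h x)) x := by
  refine (hf.div hh hx).congr_deriv ?_
  field_simp

end LogDeriv

section HestonBranch

variable {β d : ℝ → ℂ} {c : ℂ} {x : ℝ}
  (hβ : HasDerivAt β (-c) x) (hd : HasDerivAt d (-c * β x / d x) x) (hd0 : d x ≠ 0)
include hβ hd hd0

theorem hasDerivAt_sub_branch :
    HasDerivAt (fun ρ => β ρ - d ρ) (c / d x * (β x - d x)) x := by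
  refine (hβ.sub hd).congr_deriv ?_
  field_simp
  ring

theorem hasDerivAt_add_branch :
    HasDerivAt (fun ρ => β ρ + d ρ) (-(c / d x) * (β x + d x)) x := by
  refine (hβ.add hd).congr_deriv ?_
  field_simp
  ring

theorem hasDerivAt_div_branch (hβd : β x + d x ≠ 0) :
    HasDerivAt (fun ρ => (β ρ - d ρ) / (β ρ + d ρ))
      (2 * (c / d x) * ((β x - d x) / (β x + d x))) x := by
  refine ((hasDerivAt_sub_branch hβ hd hd0).div_of_eq_mul
    (hasDerivAt_add_branch hβ hd hd0) hβd).congr_deriv ?_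
  ring

end HestonBranch

theorem hasDerivAt_cexp_neg_branch {β d : ℝ → ℂ} {c τ : ℂ} {x : ℝ}
    (hd : HasDerivAt d (-c * β x / d x) x) :
    HasDerivAt (fun ρ => Complex.exp (-d ρ * τ))
      (c / d x * (τ * β x) * Complex.exp (-d x * τ)) x := by
  refine (hd.neg.mul_const τ).cexp.congr_deriv ?_
  simp only [Pi.neg_apply]
  ring

theorem hasDerivAt_mul_one_sub_div_one_sub_mul {𝕜 𝕜' : Type*} [NontriviallyNormedField 𝕜]
    [NontriviallyNormedField 𝕜'] [NormedAlgebra 𝕜 𝕜'] {N g E : 𝕜 → 𝕜'} {k m : 𝕜'} {x : 𝕜}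
    (hN : HasDerivAt N (k * N x) x) (hg : HasDerivAt g (2 * k * g x) x)
    (hE : HasDerivAt E (k * m * E x) x) (hE1 : 1 - E x ≠ 0) (hgE : 1 - g x * E x ≠ 0) :
    HasDerivAt (fun y => N y * (1 - E y) / (1 - g y * E y))
      (k * (N x * (1 - E x) / (1 - g x * E x)) *
        (1 + E x * (-m / (1 - E x) + g x * (2 + m) / (1 - g x * E x)))) x := by
  refine ((hN.mul (hE.const_sub 1)).div ((hg.mul hE).const_sub 1) hgE).congr_deriv ?_
  simp only [Pi.mul_apply]
  have hEg : 1 - E x * g x ≠ 0 := by rwa [mul_comm]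
  field_simp
  ring

theorem heston_B_deriv_rho_general (u : ℂ) (σ κ τ ρ₀ : ℝ)
    (β : ℝ → ℂ) (hβ : ∀ ρ : ℝ, β ρ = (κ : ℂ) - Complex.I * u * σ * ρ)
    (d : ℝ → ℂ) (hd : HasDerivAt d (-Complex.I * u * σ * β ρ₀ / d ρ₀) ρ₀)
    (hd0 : d ρ₀ ≠ 0) (hβd : β ρ₀ + d ρ₀ ≠ 0)
    (g : ℝ → ℂ) (hg : ∀ ρ : ℝ, g ρ = (β ρ - d ρ) / (β ρ + d ρ))
    (B : ℝ → ℂ)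
    (hB : ∀ ρ : ℝ, B ρ = ((β ρ - d ρ) / (σ : ℂ) ^ 2) *
        (1 - Complex.exp (-(d ρ) * τ)) / (1 - g ρ * Complex.exp (-(d ρ) * τ)))
    (hnum : 1 - Complex.exp (-(d ρ₀) * τ) ≠ 0)
    (hden : 1 - g ρ₀ * Complex.exp (-(d ρ₀) * τ) ≠ 0) :
    HasDerivAt B
      ((Complex.I * u * σ / d ρ₀) * B ρ₀ *
        (1 + Complex.exp (-(d ρ₀) * τ) *
          (-((τ : ℂ) * β ρ₀) / (1 - Complex.exp (-(d ρ₀) * τ))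
            + g ρ₀ * (2 + (τ : ℂ) * β ρ₀)
              / (1 - g ρ₀ * Complex.exp (-(d ρ₀) * τ))))) ρ₀ := by
  set c := Complex.I * u * σ
  have hβ' : HasDerivAt β (-c) ρ₀ := by
    rw [funext hβ]
    simpa using ((hasDerivAt_id ρ₀).ofReal_comp.const_mul c).const_sub (κ : ℂ)
  have hd' : HasDerivAt d (-c * β ρ₀ / d ρ₀) ρ₀ := hd.congr_deriv (by ring)
  have hN : HasDerivAt (fun ρ => (β ρ - d ρ) / (σ : ℂ) ^ 2)
      (c / d ρ₀ * ((β ρ₀ - d ρ₀) / (σ : ℂ) ^ 2)) ρ₀ :=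
    ((hasDerivAt_sub_branch hβ' hd' hd0).div_const _).congr_deriv (mul_div_assoc ..)
  have hg' : HasDerivAt g (2 * (c / d ρ₀) * g ρ₀) ρ₀ := by
    rw [funext hg]
    exact hasDerivAt_div_branch hβ' hd' hd0 hβd
  rw [funext hB]
  exact hasDerivAt_mul_one_sub_div_one_sub_mul hN hg'
    (hasDerivAt_cexp_neg_branch hd') hnum hden

/-- Derivative of the component `B` of the Heston characteristic function with
respect to the correlation `ρ` (Equation (39) of the paper). -/
theorem heston_B_deriv_rho (u : ℂ) (σ κ τ ρ₀ : ℝ) (hσ : σ ≠ 0) (hτ : 0 < τ)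
    (β : ℝ → ℂ) (hβ : ∀ ρ : ℝ, β ρ = (κ : ℂ) - Complex.I * u * σ * ρ)
    (d : ℝ → ℂ) (hd : HasDerivAt d (-Complex.I * u * σ * β ρ₀ / d ρ₀) ρ₀)
    (hd0 : d ρ₀ ≠ 0) (hβd : β ρ₀ + d ρ₀ ≠ 0)
    (g : ℝ → ℂ) (hg : ∀ ρ : ℝ, g ρ = (β ρ - d ρ) / (β ρ + d ρ))
    (B : ℝ → ℂ)
    (hB : ∀ ρ : ℝ, B ρ = ((β ρ - d ρ) / (σ : ℂ) ^ 2) *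
        (1 - Complex.exp (-(d ρ) * τ)) / (1 - g ρ * Complex.exp (-(d ρ) * τ)))
    (hnum : 1 - Complex.exp (-(d ρ₀) * τ) ≠ 0)
    (hden : 1 - g ρ₀ * Complex.exp (-(d ρ₀) * τ) ≠ 0) :
    HasDerivAt B
      ((Complex.I * u * σ / d ρ₀) * B ρ₀ *
        (1 + Complex.exp (-(d ρ₀) * τ) *
          (-((τ : ℂ) * β ρ₀) / (1 - Complex.exp (-(d ρ₀) * τ))
            + g ρ₀ * (2 + (τ : ℂ) * β ρ₀)
              / (1 - g ρ₀ * Complex.exp (-(d ρ₀) * τ))))) ρ₀ :=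
  heston_B_deriv_rho_general u σ κ τ ρ₀ β hβ d hd hd0 hβd g hg B hB hnum hden
end

section
/- Fix u ∈ ℂ and reals κ, ρ, τ > 0 and σ₀ ∈ ℝ with σ₀ ≠ 0. Set α̂ = -(1/2)·u·(u + i), and for σ ∈ ℝ set β(σ) = κ - i·u·σ·ρ and γ(σ) = σ²/2. Let d : ℝ → ℂ satisfy HasDerivAt d (-(i·u·ρ·β(σ₀) + 2·α̂·σ₀)/d(σ₀)) σ₀ with d(σ₀) ≠ 0 and β(σ₀) + d(σ₀) ≠ 0, and define g(σ) = (β(σ) - d(σ))/(β(σ) + d(σ)). Write β, d, g for the values at σ₀ and assume 1 - g·exp(-d·τ) ≠ 0. Then the function σ ↦ (1 - exp(-d(σ)·τ))/(1 - g(σ)·exp(-d(σ)·τ)) has derivative at σ₀ equal to ( exp(-d·τ)·(i·u·ρ·β + 2·α̂·σ₀)·( -τ·(β + d)²·(1 - g·exp(-d·τ)) + (1 - exp(-d·τ))·(2·β + τ·g·(β + d)²) ) - 2·i·u·ρ·d²·exp(-d·τ)·(1 - exp(-d·τ)) ) / ( d·(β + d)²·(1 - g·exp(-d·τ))² ). 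-/
open Complex

theorem hasDerivAt_sub_div_add {𝕜 𝕜' : Type*} [NontriviallyNormedField 𝕜]
    [NontriviallyNormedField 𝕜'] [NormedAlgebra 𝕜 𝕜'] {β d : 𝕜 → 𝕜'} {β' d' : 𝕜'} {x : 𝕜}
    (hβ : HasDerivAt β β' x) (hd : HasDerivAt d d' x) (hβd : β x + d x ≠ 0) :
    HasDerivAt (fun y => (β y - d y) / (β y + d y))
      (2 * (β' * d x - β x * d') / (β x + d x) ^ 2) x :=
  ((hβ.fun_sub hd).div (hβ.fun_add hd) hβd).congr_deriv (by ring)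

theorem hasDerivAt_one_sub_cexp_div_one_sub_mul_cexp {𝕜 : Type*} [NontriviallyNormedField 𝕜]
    [NormedAlgebra 𝕜 ℂ] {d g : 𝕜 → ℂ} {d' g' : ℂ} {x : 𝕜}
    (τ : ℂ) (hd : HasDerivAt d d' x) (hg : HasDerivAt g g' x)
    (hden : 1 - g x * exp (-d x * τ) ≠ 0) :
    HasDerivAt (fun y => (1 - exp (-d y * τ)) / (1 - g y * exp (-d y * τ)))
      ((τ * d' * exp (-d x * τ) * (1 - g x * exp (-d x * τ))
          - (1 - exp (-d x * τ)) * (τ * g x * d' - g') * exp (-d x * τ))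
        / (1 - g x * exp (-d x * τ)) ^ 2) x := by
  have hE : HasDerivAt (fun y => exp (-d y * τ)) (-τ * d' * exp (-d x * τ)) x :=
    ((hd.neg.mul_const τ).cexp).congr_deriv (by simp only [Pi.neg_apply]; ring)
  exact ((hE.const_sub 1).div ((hg.fun_mul hE).const_sub 1) hden).congr_deriv (by ring)

theorem heston_quot_deriv_sigma_general (u : ℂ) (κ ρ τ σ₀ : ℝ)
    (α : ℂ)
    (β : ℝ → ℂ) (hβ : ∀ σ : ℝ, β σ = (κ : ℂ) - Complex.I * u * σ * ρ)
    (d : ℝ → ℂ)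
    (hd : HasDerivAt d (-(Complex.I * u * ρ * β σ₀ + 2 * α * σ₀) / d σ₀) σ₀)
    (hd0 : d σ₀ ≠ 0) (hβd : β σ₀ + d σ₀ ≠ 0)
    (g : ℝ → ℂ) (hg : ∀ σ : ℝ, g σ = (β σ - d σ) / (β σ + d σ))
    (hden : 1 - g σ₀ * Complex.exp (-(d σ₀) * τ) ≠ 0) :
    HasDerivAt (fun σ : ℝ =>
        (1 - Complex.exp (-(d σ) * τ)) / (1 - g σ * Complex.exp (-(d σ) * τ)))
      ((Complex.exp (-(d σ₀) * τ) * (Complex.I * u * ρ * β σ₀ + 2 * α * σ₀) *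
          (-(τ : ℂ) * (β σ₀ + d σ₀) ^ 2
              * (1 - g σ₀ * Complex.exp (-(d σ₀) * τ))
            + (1 - Complex.exp (-(d σ₀) * τ))
              * (2 * β σ₀ + (τ : ℂ) * g σ₀ * (β σ₀ + d σ₀) ^ 2))
        - 2 * Complex.I * u * ρ * d σ₀ ^ 2 * Complex.exp (-(d σ₀) * τ)
            * (1 - Complex.exp (-(d σ₀) * τ)))
      / (d σ₀ * (β σ₀ + d σ₀) ^ 2
          * (1 - g σ₀ * Complex.exp (-(d σ₀) * τ)) ^ 2)) σ₀ := by
  have hβ' : HasDerivAt β (-(I * u * ρ)) σ₀ := by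
    rw [funext hβ]
    exact ((((hasDerivAt_id σ₀).ofReal_comp.const_mul (I * u)).mul_const (ρ : ℂ)).const_sub
      (κ : ℂ)).congr_deriv (by simp)
  have hg' := hasDerivAt_sub_div_add hβ' hd hβd
  rw [← funext hg] at hg'
  refine (hasDerivAt_one_sub_cexp_div_one_sub_mul_cexp τ hd hg' hden).congr_deriv ?_
  field_simp
  ring

/-- Derivative with respect to the vol-of-vol `σ` of
`(1 - e^{-dτ})/(1 - g e^{-dτ})` (Equation (45) of the paper). -/
theorem heston_quot_deriv_sigma (u : ℂ) (κ ρ τ σ₀ : ℝ) (hτ : 0 < τ) (hσ₀ : σ₀ ≠ 0)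
    (α : ℂ) (hα : α = -(1/2) * u * (u + Complex.I))
    (β : ℝ → ℂ) (hβ : ∀ σ : ℝ, β σ = (κ : ℂ) - Complex.I * u * σ * ρ)
    (d : ℝ → ℂ)
    (hd : HasDerivAt d (-(Complex.I * u * ρ * β σ₀ + 2 * α * σ₀) / d σ₀) σ₀)
    (hd0 : d σ₀ ≠ 0) (hβd : β σ₀ + d σ₀ ≠ 0)
    (g : ℝ → ℂ) (hg : ∀ σ : ℝ, g σ = (β σ - d σ) / (β σ + d σ))
    (hden : 1 - g σ₀ * Complex.exp (-(d σ₀) * τ) ≠ 0) :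
    HasDerivAt (fun σ : ℝ =>
        (1 - Complex.exp (-(d σ) * τ)) / (1 - g σ * Complex.exp (-(d σ) * τ)))
      ((Complex.exp (-(d σ₀) * τ) * (Complex.I * u * ρ * β σ₀ + 2 * α * σ₀) *
          (-(τ : ℂ) * (β σ₀ + d σ₀) ^ 2
              * (1 - g σ₀ * Complex.exp (-(d σ₀) * τ))
            + (1 - Complex.exp (-(d σ₀) * τ))
              * (2 * β σ₀ + (τ : ℂ) * g σ₀ * (β σ₀ + d σ₀) ^ 2))
        - 2 * Complex.I * u * ρ * d σ₀ ^ 2 * Complex.exp (-(d σ₀) * τ)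
            * (1 - Complex.exp (-(d σ₀) * τ)))
      / (d σ₀ * (β σ₀ + d σ₀) ^ 2
          * (1 - g σ₀ * Complex.exp (-(d σ₀) * τ)) ^ 2)) σ₀ :=
  heston_quot_deriv_sigma_general u κ ρ τ σ₀ α β hβ d hd hd0 hβd g hg hden
end

section
/- Fix u ∈ ℂ and reals κ, θ, ρ, τ > 0 and σ₀ ∈ ℝ with σ₀ ≠ 0. Set α̂ = -(1/2)·u·(u + i), and for σ ∈ ℝ set β(σ) = κ - i·u·σ·ρ and γ(σ) = σ²/2. Let d : ℝ → ℂ satisfy HasDerivAt d (-(i·u·ρ·β(σ₀) + 2·α̂·σ₀)/d(σ₀)) σ₀ with d(σ₀) ≠ 0 and β(σ₀) + d(σ₀) ≠ 0, define g(σ) = (β(σ) - d(σ))/(β(σ) + d(σ)), and define A(σ) = (κ·θ/σ²)·( τ·(β(σ) - d(σ)) - 2·Log((g(σ)·exp(-d(σ)·τ) - 1)/(g(σ) - 1)) ). Write β, d, g for the values at σ₀, assume g ≠ 1, g·exp(-d·τ) - 1 ≠ 0, and that (g·exp(-d·τ) - 1)/(g - 1) lies in the slit plane. Let L := ( (2·i·u·ρ·(β²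 - d²) + 4·β·α̂·σ₀)·((g - 1)·exp(-d·τ) - g·exp(-d·τ) + 1) + τ·g·(g - 1)·exp(-d·τ)·(β + d)²·(i·u·ρ·β + 2·α̂·σ₀) ) / ( d·(β + d)²·(g - 1)·(g·exp(-d·τ) - 1) ). Then HasDerivAt A ( -2·A(σ₀)/σ₀ + (κ·θ/σ₀²)·( -i·u·τ·ρ + (τ/d)·(i·u·ρ·β + 2·α̂·σ₀) - 2·L ) ) σ₀. -/
/-!
By the product rule, `A = (κθ/σ²)·F` with `F = τ(β - d) - 2 Log h`, `h = (g e^{-dτ} - 1)/(g - 1)`.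
The quotient rule gives `g' = 2(β'd - βd')/(β + d)²`, and substituting the prescribed `d'` turns
this into the first factor of the numerator of `L`. The logarithm is differentiable at `h(σ₀)`
because that point lies in the slit plane, and `(Log h)' = h'/h` simplifies to `L`.
-/

open Complex

theorem HasDerivAt.sub_div_add_s16 {b d : ℝ → ℂ} {b' d' : ℂ} {x : ℝ}
    (hb : HasDerivAt b b' x) (hd : HasDerivAt d d' x) (hbd : b x + d x ≠ 0) :
    HasDerivAt (fun t => (b t - d t) / (b t + d t))
      (2 * (b' * d x - b x * d') / (b x + d x) ^ 2) x :=
  ((hb.sub hd).div (hb.add hd) hbd).congr_deriv (by simp only [Pi.add_apply, Pi.sub_apply]; ring)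

theorem HasDerivAt.clog_mul_sub_one_div_sub_one {g E : ℝ → ℂ} {g' E' : ℂ} {x : ℝ}
    (hg : HasDerivAt g g' x) (hE : HasDerivAt E E' x)
    (hslit : (g x * E x - 1) / (g x - 1) ∈ slitPlane) :
    HasDerivAt (fun t => Complex.log ((g t * E t - 1) / (g t - 1)))
      ((g' * ((g x - 1) * E x - g x * E x + 1) + g x * (g x - 1) * E')
        / ((g x - 1) * (g x * E x - 1))) x := by
  have hden : g x - 1 ≠ 0 := (div_ne_zero_iff.mp (slitPlane_ne_zero hslit)).2
  refine ((((hg.mul hE).sub_const 1).div (hg.sub_const 1) hden).clog_real hslit).congr_deriv ?_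
  simp only [Pi.div_apply, Pi.mul_apply]
  field_simp
  ring

theorem HasDerivAt.const_div_ofReal_sq_mul {F : ℝ → ℂ} {F' : ℂ} {x : ℝ} (c : ℂ)
    (hF : HasDerivAt F F' x) (hx : x ≠ 0) :
    HasDerivAt (fun t : ℝ => c / (t : ℂ) ^ 2 * F t)
      (-2 * (c / (x : ℂ) ^ 2 * F x) / x + c / (x : ℂ) ^ 2 * F') x := by
  have hx' : (x : ℂ) ≠ 0 := ofReal_ne_zero.mpr hx
  have hsq : HasDerivAt (fun t : ℝ => (t : ℂ) ^ 2) (2 * x) x := by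
    simpa using (hasDerivAt_pow 2 (x : ℂ)).comp_ofReal
  refine (((hasDerivAt_const x c).div hsq (pow_ne_zero 2 hx')).mul hF).congr_deriv ?_
  simp only [Pi.div_apply]
  field_simp
  ring

theorem heston_A_deriv_sigma_general (u : ℂ) (κ θ ρ τ σ₀ : ℝ) (hσ₀ : σ₀ ≠ 0)
    (α : ℂ)
    (β : ℝ → ℂ) (hβ : ∀ σ : ℝ, β σ = (κ : ℂ) - Complex.I * u * σ * ρ)
    (d : ℝ → ℂ)
    (hd : HasDerivAt d (-(Complex.I * u * ρ * β σ₀ + 2 * α * σ₀) / d σ₀) σ₀)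
    (hd0 : d σ₀ ≠ 0) (hβd : β σ₀ + d σ₀ ≠ 0)
    (g : ℝ → ℂ) (hg : ∀ σ : ℝ, g σ = (β σ - d σ) / (β σ + d σ))
    (A : ℝ → ℂ)
    (hA : ∀ σ : ℝ, A σ = ((κ : ℂ) * θ / (σ : ℂ) ^ 2) *
        ((τ : ℂ) * (β σ - d σ)
          - 2 * Complex.log ((g σ * Complex.exp (-(d σ) * τ) - 1) / (g σ - 1))))
    (hslit : (g σ₀ * Complex.exp (-(d σ₀) * τ) - 1) / (g σ₀ - 1) ∈ Complex.slitPlane)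
    (L : ℂ)
    (hL : L = ((2 * Complex.I * u * ρ * (β σ₀ ^ 2 - d σ₀ ^ 2)
            + 4 * β σ₀ * α * σ₀) *
          ((g σ₀ - 1) * Complex.exp (-(d σ₀) * τ)
            - g σ₀ * Complex.exp (-(d σ₀) * τ) + 1)
        + (τ : ℂ) * g σ₀ * (g σ₀ - 1) * Complex.exp (-(d σ₀) * τ)
            * (β σ₀ + d σ₀) ^ 2 * (Complex.I * u * ρ * β σ₀ + 2 * α * σ₀))
      / (d σ₀ * (β σ₀ + d σ₀) ^ 2 * (g σ₀ - 1)
          * (g σ₀ * Complex.exp (-(d σ₀) * τ) - 1))) :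
    HasDerivAt A
      (-2 * A σ₀ / σ₀
        + ((κ : ℂ) * θ / (σ₀ : ℂ) ^ 2) *
          (-(Complex.I * u * τ * ρ)
            + ((τ : ℂ) / d σ₀) * (Complex.I * u * ρ * β σ₀ + 2 * α * σ₀)
            - 2 * L)) σ₀ := by
  have hβ' : HasDerivAt β (-(I * u * ρ)) σ₀ := by
    rw [funext hβ]
    simpa using
      (((hasDerivAt_id σ₀).ofReal_comp.const_mul (I * u)).mul_const (ρ : ℂ)).const_sub (κ : ℂ)
  have hg' : HasDerivAt g ((2 * I * u * ρ * (β σ₀ ^ 2 - d σ₀ ^ 2) + 4 * β σ₀ * α * σ₀)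
      / (d σ₀ * (β σ₀ + d σ₀) ^ 2)) σ₀ := by
    rw [funext hg]
    refine (hβ'.sub_div_add_s16 hd hβd).congr_deriv ?_
    field_simp
    ring
  have hE : HasDerivAt (fun σ : ℝ => exp (-(d σ) * τ))
      (exp (-(d σ₀) * τ) * (τ * (I * u * ρ * β σ₀ + 2 * α * σ₀) / d σ₀)) σ₀ :=
    (hd.neg.mul_const (τ : ℂ)).cexp.congr_deriv (by simp only [Pi.neg_apply]; ring)
  have hlog : HasDerivAt (fun σ : ℝ => log ((g σ * exp (-(d σ) * τ) - 1) / (g σ - 1))) L σ₀ := by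
    refine (hg'.clog_mul_sub_one_div_sub_one hE hslit).congr_deriv ?_
    rw [hL]
    field_simp
  have hF : HasDerivAt (fun σ : ℝ => (τ : ℂ) * (β σ - d σ)
        - 2 * log ((g σ * exp (-(d σ) * τ) - 1) / (g σ - 1)))
      (τ * (-(I * u * ρ) - -(I * u * ρ * β σ₀ + 2 * α * σ₀) / d σ₀) - 2 * L) σ₀ :=
    ((hβ'.sub hd).const_mul (τ : ℂ)).sub (hlog.const_mul 2)
  refine ((hF.const_div_ofReal_sq_mul _ hσ₀).congr_of_eventuallyEq
    (Filter.Eventually.of_forall hA)).congr_deriv ?_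
  rw [hA σ₀]
  ring

/-- Derivative of the component `A` of the Heston characteristic function with
respect to the vol-of-vol `σ` (Equation (41) of the paper, with Equation (42)
substituted for the log-derivative `L`). -/
theorem heston_A_deriv_sigma (u : ℂ) (κ θ ρ τ σ₀ : ℝ) (hτ : 0 < τ) (hσ₀ : σ₀ ≠ 0)
    (α : ℂ) (hα : α = -(1/2) * u * (u + Complex.I))
    (β : ℝ → ℂ) (hβ : ∀ σ : ℝ, β σ = (κ : ℂ) - Complex.I * u * σ * ρ)
    (d : ℝ → ℂ)
    (hd : HasDerivAt d (-(Complex.I * u * ρ * β σ₀ + 2 * α * σ₀) / d σ₀) σ₀)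
    (hd0 : d σ₀ ≠ 0) (hβd : β σ₀ + d σ₀ ≠ 0)
    (g : ℝ → ℂ) (hg : ∀ σ : ℝ, g σ = (β σ - d σ) / (β σ + d σ))
    (A : ℝ → ℂ)
    (hA : ∀ σ : ℝ, A σ = ((κ : ℂ) * θ / (σ : ℂ) ^ 2) *
        ((τ : ℂ) * (β σ - d σ)
          - 2 * Complex.log ((g σ * Complex.exp (-(d σ) * τ) - 1) / (g σ - 1))))
    (hg1 : g σ₀ ≠ 1)
    (hden : g σ₀ * Complex.exp (-(d σ₀) * τ) - 1 ≠ 0)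
    (hslit : (g σ₀ * Complex.exp (-(d σ₀) * τ) - 1) / (g σ₀ - 1) ∈ Complex.slitPlane)
    (L : ℂ)
    (hL : L = ((2 * Complex.I * u * ρ * (β σ₀ ^ 2 - d σ₀ ^ 2)
            + 4 * β σ₀ * α * σ₀) *
          ((g σ₀ - 1) * Complex.exp (-(d σ₀) * τ)
            - g σ₀ * Complex.exp (-(d σ₀) * τ) + 1)
        + (τ : ℂ) * g σ₀ * (g σ₀ - 1) * Complex.exp (-(d σ₀) * τ)
            * (β σ₀ + d σ₀) ^ 2 * (Complex.I * u * ρ * β σ₀ + 2 * α * σ₀))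
      / (d σ₀ * (β σ₀ + d σ₀) ^ 2 * (g σ₀ - 1)
          * (g σ₀ * Complex.exp (-(d σ₀) * τ) - 1))) :
    HasDerivAt A
      (-2 * A σ₀ / σ₀
        + ((κ : ℂ) * θ / (σ₀ : ℂ) ^ 2) *
          (-(Complex.I * u * τ * ρ)
            + ((τ : ℂ) / d σ₀) * (Complex.I * u * ρ * β σ₀ + 2 * α * σ₀)
            - 2 * L)) σ₀ :=
  heston_A_deriv_sigma_general u κ θ ρ τ σ₀ hσ₀ α β hβ d hd hd0 hβd g hg A hA hslit L hL
end

section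
/- Fix u ∈ ℂ and reals κ, θ, v₀, σ ≠ 0, ρ and τ₀ > 0. Set α̂ = -(1/2)·u·(u + i), γ = σ²/2, β = κ - i·u·σ·ρ; let d ∈ ℂ with d² = β² - 4·α̂·γ, β + d ≠ 0, and g = (β - d)/(β + d). Assume g ≠ 1, 1 - g·exp(-d·τ₀) ≠ 0, 1 - exp(-d·τ₀) ≠ 0, and that (g·exp(-d·τ₀) - 1)/(g - 1) lies in the slit plane. Define A(τ) = (κ·θ/σ²)·( τ·(β - d) - 2·Log((g·exp(-d·τ) - 1)/(g - 1)) ), B(τ) = ((β - d)/σ²)·(1 - exp(-d·τ))/(1 - g·exp(-d·τ)), and φ(τ) = exp(A(τ) + v₀·B(τ)). Then HasDerivAt φ ( φ(τ₀)·( (κ·θ/σ²)·( β - d - 2·d·g·exp(-d·τ₀)/(1 - g·exp(-d·τ₀)) ) + v₀·B(τ₀)·d·exp(-d·τ₀)·(1 - g)/((1 - exp(-d·τ₀))·(1 - g·exp(-d·τ₀))) ) ) τ₀. -/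
/-!
Both exponents are built from `E(τ) = exp(-d τ)`, whose `τ`-derivative is `-d E`. The logarithm in
`A` differentiates to `d g E / (1 - g E)` (its argument stays in the slit plane, where `Log' = z⁻¹`),
and the quotient rule gives `(1 - E)/(1 - g E)` the derivative `d E (1 - g)/(1 - g E)²`, which is
`B` times `d E (1 - g)/((1 - E)(1 - g E))` as long as `1 - E ≠ 0`.
-/

open Complex

theorem hasDerivAt_cexp_mul_ofReal (c : ℂ) (t : ℝ) :
    HasDerivAt (fun t : ℝ => cexp (c * t)) (c * cexp (c * t)) t := by
  have hlin : HasDerivAt (fun t : ℝ => c * (t : ℂ)) c t := by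
    simpa using (hasDerivAt_id t).ofReal_comp.const_mul c
  simpa [mul_comm] using hlin.cexp

section

variable (d g : ℂ) (τ : ℝ)

theorem hasDerivAt_clog_mul_cexp_sub_one_div
    (hw : (g * cexp (-d * τ) - 1) / (g - 1) ∈ slitPlane) :
    HasDerivAt (fun t : ℝ => log ((g * cexp (-d * t) - 1) / (g - 1)))
      (d * g * cexp (-d * τ) / (1 - g * cexp (-d * τ))) τ := by
  obtain ⟨hgE, hg⟩ := div_ne_zero_iff.mp (slitPlane_ne_zero hw)
  have hlog := ((((hasDerivAt_cexp_mul_ofReal (-d) τ).const_mul g).sub_const 1).div_const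
    (g - 1)).clog_real hw
  refine hlog.congr_deriv ?_
  generalize cexp (-d * τ) = E at hgE ⊢
  have hgE' : 1 - g * E ≠ 0 := fun h => hgE (by linear_combination -h)
  field_simp
  ring

theorem hasDerivAt_one_sub_cexp_div_one_sub_mul_cexp_s19 (hden : 1 - g * cexp (-d * τ) ≠ 0) :
    HasDerivAt (fun t : ℝ => (1 - cexp (-d * t)) / (1 - g * cexp (-d * t)))
      (d * cexp (-d * τ) * (1 - g) / (1 - g * cexp (-d * τ)) ^ 2) τ := by
  have hE := hasDerivAt_cexp_mul_ofReal (-d) τ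
  refine ((hE.const_sub 1).div ((hE.const_mul g).const_sub 1) hden).congr_deriv ?_
  ring

end

theorem heston_phi_deriv_tau_general (κ θ v₀ σ τ₀ : ℝ)
    (β d g : ℂ)
    (hden : 1 - g * Complex.exp (-d * τ₀) ≠ 0)
    (hnum : 1 - Complex.exp (-d * τ₀) ≠ 0)
    (hslit : (g * Complex.exp (-d * τ₀) - 1) / (g - 1) ∈ Complex.slitPlane)
    (A B φ : ℝ → ℂ)
    (hA : ∀ τ : ℝ, A τ = ((κ : ℂ) * θ / σ ^ 2) *
        ((τ : ℂ) * (β - d)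
          - 2 * Complex.log ((g * Complex.exp (-d * τ) - 1) / (g - 1))))
    (hB : ∀ τ : ℝ, B τ = ((β - d) / (σ : ℂ) ^ 2) *
        (1 - Complex.exp (-d * τ)) / (1 - g * Complex.exp (-d * τ)))
    (hφ : ∀ τ : ℝ, φ τ = Complex.exp (A τ + (v₀ : ℂ) * B τ)) :
    HasDerivAt φ
      (φ τ₀ *
        (((κ : ℂ) * θ / σ ^ 2) *
            (β - d - 2 * d * g * Complex.exp (-d * τ₀)
              / (1 - g * Complex.exp (-d * τ₀)))
          + (v₀ : ℂ) * B τ₀ * d * Complex.exp (-d * τ₀) * (1 - g)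
            / ((1 - Complex.exp (-d * τ₀))
                * (1 - g * Complex.exp (-d * τ₀))))) τ₀ := by
  have hA' : HasDerivAt A (κ * θ / σ ^ 2 *
      (β - d - 2 * (d * g * cexp (-d * τ₀) / (1 - g * cexp (-d * τ₀))))) τ₀ := by
    rw [funext hA]
    have hτ : HasDerivAt (fun t : ℝ => (t : ℂ) * (β - d)) (β - d) τ₀ := by
      simpa using (hasDerivAt_id τ₀).ofReal_comp.mul_const (β - d)
    exact (hτ.sub ((hasDerivAt_clog_mul_cexp_sub_one_div d g τ₀ hslit).const_mul 2)).const_mul _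
  have hB' : HasDerivAt B (B τ₀ * (d * cexp (-d * τ₀) * (1 - g) /
      ((1 - cexp (-d * τ₀)) * (1 - g * cexp (-d * τ₀))))) τ₀ := by
    rw [hB, show B = _ from funext fun t => (hB t).trans (mul_div_assoc _ _ _)]
    refine ((hasDerivAt_one_sub_cexp_div_one_sub_mul_cexp_s19 d g τ₀ hden).const_mul _).congr_deriv ?_
    generalize cexp (-d * τ₀) = E at hden hnum ⊢
    field_simp
  rw [funext hφ]
  refine (hA'.add (hB'.const_mul (v₀ : ℂ))).cexp.congr_deriv ?_
  simp only [Pi.add_apply]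
  ring

/-- Derivative of the Heston characteristic function `φ_τ(u) = exp(A + v₀ B)`
with respect to the time to maturity `τ` (Equation (34) of the paper). -/
theorem heston_phi_deriv_tau (u : ℂ) (κ θ v₀ σ ρ τ₀ : ℝ) (hσ : σ ≠ 0)
    (hτ₀ : 0 < τ₀)
    (α β d g : ℂ) (hα : α = -(1/2) * u * (u + Complex.I))
    (hβ : β = (κ : ℂ) - Complex.I * u * σ * ρ)
    (hd : d ^ 2 = β ^ 2 - 4 * α * ((σ : ℂ) ^ 2 / 2))
    (hβd : β + d ≠ 0) (hg : g = (β - d) / (β + d))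
    (hg1 : g ≠ 1)
    (hden : 1 - g * Complex.exp (-d * τ₀) ≠ 0)
    (hnum : 1 - Complex.exp (-d * τ₀) ≠ 0)
    (hslit : (g * Complex.exp (-d * τ₀) - 1) / (g - 1) ∈ Complex.slitPlane)
    (A B φ : ℝ → ℂ)
    (hA : ∀ τ : ℝ, A τ = ((κ : ℂ) * θ / σ ^ 2) *
        ((τ : ℂ) * (β - d)
          - 2 * Complex.log ((g * Complex.exp (-d * τ) - 1) / (g - 1))))
    (hB : ∀ τ : ℝ, B τ = ((β - d) / (σ : ℂ) ^ 2) *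
        (1 - Complex.exp (-d * τ)) / (1 - g * Complex.exp (-d * τ)))
    (hφ : ∀ τ : ℝ, φ τ = Complex.exp (A τ + (v₀ : ℂ) * B τ)) :
    HasDerivAt φ
      (φ τ₀ *
        (((κ : ℂ) * θ / σ ^ 2) *
            (β - d - 2 * d * g * Complex.exp (-d * τ₀)
              / (1 - g * Complex.exp (-d * τ₀)))
          + (v₀ : ℂ) * B τ₀ * d * Complex.exp (-d * τ₀) * (1 - g)
            / ((1 - Complex.exp (-d * τ₀))
                * (1 - g * Complex.exp (-d * τ₀))))) τ₀ :=
  heston_phi_deriv_tau_general κ θ v₀ σ τ₀ β d g hden hnum hslit A B φ hA hB hφ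
end
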